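/- Let Γ be a triangle, i.e. the graph with three vertices p₁, p₂, p₃, any two of which are joined by exactly one edge, let α be an axial function on Γ with values in ℤ^m modulo sign, and consider any quaternionic structure on (Γ, α). Let ã, b̃ ∈ ℤ^m be quaternionically compatible lifts at p₁ of the labels of the edges p₁p₂ and p₁p₃ respectively, so that λ̃ = ã + b̃ is a lift of λ(p₁). Then exactly one of the following holds: (noncomplex case) the label of the edge p₂p₃ is ±λ̃, and the quaternionic weights are λ(p₂) = ±b̃ and λ(p₃) = ±ã; or (complex case) the label of the edge p₂p₃ is ±(b̃ − ã), and the quaternionic weights are λ(p₂) = ±(b̃ − 2ã) and λ(p₃) = ±(2b̃ − ã). -/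

import Mathlib

namespace GKMQ

/-- `x` equals `y` up to sign (`x` is a "lift" of the class of `y` mod sign). -/
def PM {m : ℕ} (x y : Fin m → ℤ) : Prop := x = y ∨ x = -y

/-- coefficientwise coercion of an integer vector to `ℚ`. -/
def ratQ {m : ℕ} (x : Fin m → ℤ) : Fin m → ℚ := fun i => (x i : ℚ)

/-- An abstract graph: finite vertex and oriented-edge sets, a fixed-point-free
orientation-reversal involution `bar`, no loops; multiple edges are allowed. -/
structure Graph where
  V : Type
  E : Type
  fintypeV : Fintype V
  fintypeE : Fintype E
  src : E → V
  bar : E → E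
  bar_invol : ∀ e, bar (bar e) = e
  bar_ne : ∀ e, bar e ≠ e
  no_loop : ∀ e, src (bar e) ≠ src e

/-- The terminal vertex of an oriented edge. -/
def Graph.tgt (G : Graph) (e : G.E) : G.V := G.src (G.bar e)

/-- A connection on a graph; `map e` is a bijection `E_{i(e)} → E_{t(e)}` with
`∇_e e = ē` and `∇_{ē} = (∇_e)⁻¹` (its values outside `E_{i(e)}` are irrelevant). -/
structure Connection (G : Graph) where
  map : G.E → G.E → G.E
  map_src : ∀ e f, G.src f = G.src e → G.src (map e f) = G.tgt e
  map_self : ∀ e, map e e = G.bar e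
  map_bar : ∀ e f, G.src f = G.src e → map (G.bar e) (map e f) = f

/-- Compatibility of a connection with an edge labeling (mod sign): for every edge `e`
and `f ∈ E_{i(e)}` there are lifts of the labels of `f` and `∇_e f` differing by an
integer multiple of the label of `e`. -/
def CompatibleConn (G : Graph) {m : ℕ} (label : G.E → (Fin m → ℤ)) (C : Connection G) :
    Prop :=
  ∀ e f, G.src f = G.src e →
    ∃ x y : Fin m → ℤ, PM x (label f) ∧ PM y (label (C.map e f)) ∧
      ∃ c : ℤ, y = x + c • label e

/-- An axial function with values in `ℤ^m` modulo sign; `label` is a choice of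
representatives, so that all labels are well defined up to sign. -/
structure Axial (G : Graph) (m : ℕ) where
  label : G.E → (Fin m → ℤ)
  label_bar : ∀ e, PM (label (G.bar e)) (label e)
  indep₂ : ∀ e f, G.src f = G.src e → e ≠ f →
    LinearIndependent ℚ ![ratQ (label e), ratQ (label f)]
  exists_compat : ∃ C : Connection G, CompatibleConn G label C

/-- The GKM_k condition: at every vertex, any `k` of the labels are linearly
independent over `ℚ`. -/
def Axial.IsGKM {G : Graph} {m : ℕ} (A : Axial G m) (k : ℕ) : Prop :=
  ∀ v : G.V, ∀ s : Finset G.E, (∀ e ∈ s, G.src e = v) → s.card = k →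
    LinearIndependent ℚ (fun e : {x // x ∈ s} => ratQ (A.label e.1))

/-- A full quaternionically compatible family of lifts at a vertex `v`: `L` assigns to
every edge at `v` a lift of its label, `ℓ` is a lift of the quaternionic weight, and the
lifts of each quaternionic pair sum to `ℓ`. -/
def QFam (G : Graph) {m : ℕ} (label : G.E → (Fin m → ℤ)) (lam : G.V → (Fin m → ℤ))
    (qpair : G.E → G.E) (v : G.V) (L : G.E → (Fin m → ℤ)) (ℓ : Fin m → ℤ) : Prop :=
  PM ℓ (lam v) ∧ ∀ e, G.src e = v → PM (L e) (label e) ∧ L e + L (qpair e) = ℓ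

/-- A partial family `s` of lifts, together with a lift `ℓ` of the quaternionic weight
at `v`, is quaternionically compatible if it extends to a full family. -/
def QCompat (G : Graph) {m : ℕ} (label : G.E → (Fin m → ℤ)) (lam : G.V → (Fin m → ℤ))
    (qpair : G.E → G.E) (v : G.V) (s : List (G.E × (Fin m → ℤ))) (ℓ : Fin m → ℤ) :
    Prop :=
  ∃ L, QFam G label lam qpair v L ℓ ∧ ∀ p ∈ s, L p.1 = p.2

/-- Condition (2) in the definition of a quaternionic structure on a GKM graph. -/
def QuatCondTwo (G : Graph) {m : ℕ} (label : G.E → (Fin m → ℤ))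
    (lam : G.V → (Fin m → ℤ)) (qpair : G.E → G.E) : Prop :=
  ∃ C : Connection G, CompatibleConn G label C ∧
    (∀ e f, G.src f = G.src e → C.map e (qpair f) = qpair (C.map e f)) ∧
    ∀ e xe lv, QCompat G label lam qpair (G.src e) [(e, xe)] lv →
      ∃ lw, (∃ c : ℤ, lw = lv + c • label e) ∧
        QCompat G label lam qpair (G.tgt e) [(G.bar e, -xe)] lw ∧
        ∀ f, G.src f = G.src e → ∀ xf,
          QCompat G label lam qpair (G.src e) [(e, xe), (f, xf)] lv →
          ∀ y, PM y (label (C.map e f)) → (∃ c : ℤ, y = xf + c • label e) →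
            QCompat G label lam qpair (G.tgt e) [(G.bar e, -xe), (C.map e f, y)] lw

/-- A quaternionic structure on an abstract GKM graph: a quaternionic weight (mod sign)
at every vertex, and a grouping of the edges at each vertex into quaternionic pairs,
subject to conditions (1) (`pair_sum`) and (2) (`cond₂`). -/
structure QuatStructure (G : Graph) {m : ℕ} (A : Axial G m) where
  lam : G.V → (Fin m → ℤ)
  qpair : G.E → G.E
  qpair_src : ∀ e, G.src (qpair e) = G.src e
  qpair_ne : ∀ e, qpair e ≠ e
  qpair_invol : ∀ e, qpair (qpair e) = e
  pair_sum : ∀ e, ∃ x y : Fin m → ℤ, PM x (A.label e) ∧ PM y (A.label (qpair e)) ∧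
    PM (x + y) (lam (G.src e))
  cond₂ : QuatCondTwo G A.label lam qpair

/-- Auxiliary function: consecutive pairs of edges of a connection path. -/
def connAux (G : Graph) (C : Connection G) (e₁ e₂ : G.E) : ℕ → G.E × G.E
  | 0 => (e₁, e₂)
  | n + 1 =>
    let p := connAux G C e₁ e₂ n
    (p.2, C.map p.2 (G.bar p.1))

/-- The connection path with prescribed first two edges `e₁, e₂` (where `t(e₁) = i(e₂)`):
`g 0 = e₁`, `g 1 = e₂`, `g (k+2) = ∇_{g (k+1)} (bar (g k))`. -/
def connPathFrom (G : Graph) (C : Connection G) (e₁ e₂ : G.E) (k : ℕ) : G.E :=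
  (connAux G C e₁ e₂ k).1

/-- The connection path through two edges `e, f` starting at the same vertex:
`g 0 = e`, `g 1 = ∇_e f`, `g (k+2) = ∇_{g (k+1)} (bar (g k))`. -/
def connPath (G : Graph) (C : Connection G) (e f : G.E) : ℕ → G.E :=
  connPathFrom G C e (C.map e f)

def IsPeriod {α : Type*} (g : ℕ → α) (N : ℕ) : Prop := 0 < N ∧ ∀ k, g (k + N) = g k

/-- `N` is the minimal period of the sequence `g`. -/
def MinPeriod {α : Type*} (g : ℕ → α) (N : ℕ) : Prop :=
  IsPeriod g N ∧ ∀ N', IsPeriod g N' → N ≤ N'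

/-- A 2-face (given by its connection path `g`) is quaternionic if at each of its
vertices the two edges of the face based there form a quaternionic pair. -/
def IsQuatPath (G : Graph) {m : ℕ} {A : Axial G m} (Q : QuatStructure G A)
    (g : ℕ → G.E) : Prop :=
  ∀ k, Q.qpair (g (k + 1)) = G.bar (g k)

/-- A noncomplex triangle: a quaternionic 2-face which is a triangle with labels
`±a, ±λ, ±(λ-a)` and quaternionic weights `±λ, ±(λ-a), ±a` at its three vertices. -/
def IsNoncomplexTriangle (G : Graph) {m : ℕ} {A : Axial G m} (Q : QuatStructure G A)
    (g : ℕ → G.E) : Prop :=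
  MinPeriod g 3 ∧ IsQuatPath G Q g ∧
  ∃ a l : Fin m → ℤ,
    PM (A.label (g 0)) a ∧ PM (A.label (g 1)) l ∧ PM (A.label (g 2)) (l - a) ∧
    PM (Q.lam (G.src (g 0))) l ∧ PM (Q.lam (G.src (g 1))) (l - a) ∧
    PM (Q.lam (G.src (g 2))) a

/-- Hypothesis (H): a GKM₃ graph with quaternionic structure all of whose quaternionic
2-faces are biangles or noncomplex triangles and all of whose complex 2-faces are
triangles or quadrangles. -/
def HypH (G : Graph) {m : ℕ} (A : Axial G m) (Q : QuatStructure G A) : Prop :=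
  A.IsGKM 3 ∧
  ∀ C : Connection G, CompatibleConn G A.label C →
    ∀ e f, G.src f = G.src e → f ≠ e →
      ∀ N, MinPeriod (connPath G C e f) N →
        (IsQuatPath G Q (connPath G C e f) →
          N = 2 ∨ IsNoncomplexTriangle G Q (connPath G C e f)) ∧
        (¬ IsQuatPath G Q (connPath G C e f) → N = 3 ∨ N = 4)

/-- A compatible signed structure on a 2-face with edges `g 0, …, g (N-1)`
(indices mod `N`): lifts `γ k` of the labels `α (g k)` such that consecutive lifts
satisfy the connection congruence and are quaternionically compatible at each vertex. -/
def SignedStructureOn (G : Graph) {m : ℕ} (A : Axial G m) (Q : QuatStructure G A)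
    (g : ℕ → G.E) (N : ℕ) (γ : ℕ → (Fin m → ℤ)) : Prop :=
  (∀ k, γ (k + N) = γ k) ∧
  (∀ k, PM (γ k) (A.label (g k))) ∧
  (∀ k, ∃ c : ℤ, γ (k + 2) + γ k = c • γ (k + 1)) ∧
  (∀ k, ∃ ℓ, QCompat G A.label Q.lam Q.qpair (G.tgt (g k))
      [(G.bar (g k), -(γ k)), (g (k + 1), γ (k + 1))] ℓ)

/-- The raw data of a GKM graph with quaternionic structure: vertices, oriented edges,
labels, quaternionic weights (both as chosen representatives mod sign) and quaternionic
pairs. -/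
structure QData (m : ℕ) where
  V : Type
  E : Type
  src : E → V
  bar : E → E
  label : E → (Fin m → ℤ)
  lam : V → (Fin m → ℤ)
  qpair : E → E

/-- The quaternionic GKM data underlying a GKM graph with quaternionic structure. -/
def toQData (G : Graph) {m : ℕ} (A : Axial G m) (Q : QuatStructure G A) : QData m :=
  ⟨G.V, G.E, G.src, G.bar, A.label, Q.lam, Q.qpair⟩

/-- An isomorphism of GKM graphs with quaternionic structure: bijections of vertices and
oriented edges commuting with `src`, `bar` and the quaternionic pairing, and preserving
the labels and the quaternionic weights up to sign. -/
structure QIso {m : ℕ} (D₁ D₂ : QData m) where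
  vmap : D₁.V ≃ D₂.V
  emap : D₁.E ≃ D₂.E
  src_comm : ∀ e, D₂.src (emap e) = vmap (D₁.src e)
  bar_comm : ∀ e, D₂.bar (emap e) = emap (D₁.bar e)
  label_pm : ∀ e, PM (D₂.label (emap e)) (D₁.label e)
  lam_pm : ∀ v, PM (D₂.lam (vmap v)) (D₁.lam v)
  qpair_comm : ∀ e, D₂.qpair (emap e) = emap (D₁.qpair e)

/-- The model graph `Γ_{ℍP}(λ; β₀, …, β_n)` of a torus action on `ℍPⁿ`: vertices
`0, …, n`, two edges between any two distinct vertices `k, l`, labeled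
`±(β_k - β_l)` and `±(λ - β_k - β_l)`, quaternionic weight `±(λ - 2β_k)` at `k`,
the two edges of each biangle forming a quaternionic pair. -/
def modelHP (n : ℕ) {m : ℕ} (lam₀ : Fin m → ℤ) (β : Fin (n + 1) → (Fin m → ℤ)) :
    QData m where
  V := Fin (n + 1)
  E := {p : Fin (n + 1) × Fin (n + 1) // p.1 ≠ p.2} × Bool
  src e := e.1.1.1
  bar e := (⟨(e.1.1.2, e.1.1.1), Ne.symm e.1.2⟩, e.2)
  label e := if e.2 then lam₀ - β e.1.1.1 - β e.1.1.2 else β e.1.1.1 - β e.1.1.2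
  lam k := lam₀ - (2 : ℤ) • β k
  qpair e := (e.1, !e.2)

/-- The 2-element subset `{i, j}` (`i ≠ j`) realized as a sorted pair. -/
def uPair {n : ℕ} (i j : Fin n) (h : i ≠ j) : {p : Fin n × Fin n // p.1 < p.2} :=
  if hlt : i < j then ⟨(i, j), hlt⟩ else ⟨(j, i), h.lt_or_gt.resolve_left hlt⟩

/-- The model graph `Γ_{Gr}(β₁, …, β_n)` of a torus action on `Gr₂(ℂⁿ)`: vertices the
2-element subsets of `{1, …, n}`; an oriented edge `(i, j, k)` from `{i, j}` to `{i, k}`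
for `j ≠ k`, labeled `±(β_j - β_k)`; quaternionic weight `±(β_i - β_j)` at `{i, j}`;
the edges `(i, j, k)` and `(j, i, k)` forming a quaternionic pair at `{i, j}`. -/
def modelGr (n : ℕ) {m : ℕ} (β : Fin n → (Fin m → ℤ)) : QData m where
  V := {p : Fin n × Fin n // p.1 < p.2}
  E := {t : Fin n × Fin n × Fin n // t.1 ≠ t.2.1 ∧ t.1 ≠ t.2.2 ∧ t.2.1 ≠ t.2.2}
  src e := uPair e.1.1 e.1.2.1 e.2.1
  bar e := ⟨(e.1.1, e.1.2.2, e.1.2.1), e.2.2.1, e.2.1, Ne.symm e.2.2.2⟩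
  label e := β e.1.2.1 - β e.1.2.2
  lam v := β v.1.1 - β v.1.2
  qpair e := ⟨(e.1.2.1, e.1.1, e.1.2.2), Ne.symm e.2.1, e.2.2.2, e.2.2.1⟩

/-- A subgraph (with quaternionic structure) of a GKM graph with quaternionic
structure: sets of vertices and of oriented edges closed under `src`, `bar` and the
quaternionic pairing. -/
structure SubData (G : Graph) {m : ℕ} (A : Axial G m) (Q : QuatStructure G A) where
  W : Set G.V
  F : Set G.E
  src_mem : ∀ e ∈ F, G.src e ∈ W
  bar_mem : ∀ e ∈ F, G.bar e ∈ F
  qpair_mem : ∀ e ∈ F, Q.qpair e ∈ F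

/-- The quaternionic GKM data induced on a subgraph. -/
def SubData.toQData {G : Graph} {m : ℕ} {A : Axial G m} {Q : QuatStructure G A}
    (S : SubData G A Q) : QData m where
  V := S.W
  E := S.F
  src e := ⟨G.src e.1, S.src_mem e.1 e.2⟩
  bar e := ⟨G.bar e.1, S.bar_mem e.1 e.2⟩
  label e := A.label e.1
  lam v := Q.lam v.1
  qpair e := ⟨Q.qpair e.1, S.qpair_mem e.1 e.2⟩

/-! Transporting the quaternionic pair `{e₁₂, e₁₃}` across `e₁₂` and across `e₁₃` by
condition (2) produces two lifts `b + s a` and `a + t b` of the label of `p₂p₃`; adding `-a`,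
resp. `-b`, to them gives lifts of the quaternionic weights at `p₂`, resp. `p₃`. Since they lift the same label, `b + s a = ±(a + t b)`, and linear
independence of `a, b` forces `s = t = 1` (noncomplex case) or `s = t = -1` (complex case);
the two cases exclude each other since `a + b ≠ ±(b - a)`. -/

section SignedLifts

variable {m : ℕ} {x y z : Fin m → ℤ}

theorem PM.symm (h : PM x y) : PM y x := by
  rcases h with rfl | rfl
  · exact Or.inl rfl
  · exact Or.inr (neg_neg y).symm

theorem PM.trans (h : PM x y) (h' : PM y z) : PM x z := by
  rcases h with rfl | rfl <;> rcases h' with rfl | rfl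
  exacts [Or.inl rfl, Or.inr rfl, Or.inr rfl, Or.inl (neg_neg z)]

theorem PM.neg_left (h : PM x y) : PM (-x) y := by
  rcases h with rfl | rfl
  exacts [Or.inr rfl, Or.inl (neg_neg y)]

theorem PM.exists_smul_eq (h : PM x y) (c : ℤ) : ∃ d : ℤ, c • x = d • y := by
  rcases h with rfl | rfl
  exacts [⟨c, rfl⟩, ⟨-c, by rw [smul_neg, neg_smul]⟩]

theorem PM.exists_units_smul (h : PM x y) : ∃ ε : ℤˣ, x = ε • y := by
  rcases h with rfl | rfl
  exacts [⟨1, by simp⟩, ⟨-1, by simp⟩]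

theorem PM.exists_pm_add_smul {x' y' u : Fin m → ℤ} {c : ℤ} (hx' : PM x' y)
    (h : y' = x' + c • u) : ∃ d : ℤ, PM (y + d • u) y' := by
  rcases hx' with rfl | rfl
  · exact ⟨c, Or.inl h.symm⟩
  · exact ⟨-c, Or.inr (by rw [h]; module)⟩

end SignedLifts

section Independence

variable {m : ℕ} {u v a b : Fin m → ℤ}

theorem linearIndependent_int_of_ratQ (h : LinearIndependent ℚ ![ratQ u, ratQ v]) :
    LinearIndependent ℤ ![u, v] := by
  rw [LinearIndependent.pair_iff] at h ⊢
  intro s t hst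
  have hQ : (s : ℚ) • ratQ u + (t : ℚ) • ratQ v = 0 := by
    funext i
    simpa [ratQ] using congr((($hst i : ℤ) : ℚ))
  exact_mod_cast h s t hQ

theorem linearIndependent_of_pm (h : LinearIndependent ℤ ![u, v]) (ha : PM a u)
    (hb : PM b v) : LinearIndependent ℤ ![a, b] := by
  obtain ⟨ε, rfl⟩ := ha.exists_units_smul
  obtain ⟨δ, rfl⟩ := hb.exists_units_smul
  convert h.units_smul ![ε, δ] using 1
  funext i
  fin_cases i <;> rfl

theorem coeffs_eq_of_pm_add_smul (hab : LinearIndependent ℤ ![a, b]) {s t : ℤ}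
    (h : PM (b + s • a) (a + t • b)) : (s = 1 ∧ t = 1) ∨ (s = -1 ∧ t = -1) := by
  rw [LinearIndependent.pair_iff] at hab
  rcases h with h | h
  · have := hab (s - 1) (1 - t) (by linear_combination (norm := module) h)
    omega
  · have := hab (s + 1) (t + 1) (by linear_combination (norm := module) h)
    omega

theorem not_pm_add_sub (hab : LinearIndependent ℤ ![a, b]) :
    ¬ PM (a + b) (b - a) := by
  rw [LinearIndependent.pair_iff] at hab
  rintro (h | h)
  · have := hab 2 0 (by linear_combination (norm := module) h)
    omega
  · have := hab 0 2 (by linear_combination (norm := module) h)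
    omega

end Independence

theorem triangle_cases_of_lifts {m : ℕ} {a b ℓ w₂ w₃ : Fin m → ℤ} {s t : ℤ}
    (hab : LinearIndependent ℤ ![a, b]) (hs : PM (b + s • a) ℓ) (hw₂ : PM (b + s • a - a) w₂)
    (ht : PM (a + t • b) ℓ) (hw₃ : PM (a + t • b - b) w₃) :
    ((PM ℓ (a + b) ∧ PM w₂ b ∧ PM w₃ a) ∨
     (PM ℓ (b - a) ∧ PM w₂ (b - (2 : ℤ) • a) ∧ PM w₃ ((2 : ℤ) • b - a))) ∧
    ¬ ((PM ℓ (a + b) ∧ PM w₂ b ∧ PM w₃ a) ∧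
       (PM ℓ (b - a) ∧ PM w₂ (b - (2 : ℤ) • a) ∧ PM w₃ ((2 : ℤ) • b - a))) := by
  refine ⟨?_, fun h => not_pm_add_sub hab (h.1.1.symm.trans h.2.1)⟩
  rcases coeffs_eq_of_pm_add_smul hab (hs.trans ht.symm) with ⟨rfl, rfl⟩ | ⟨rfl, rfl⟩
  · refine Or.inl ⟨?_, ?_, ?_⟩
    · convert ht.symm using 1; module
    · convert hw₂.symm using 1; module
    · convert hw₃.symm using 1; module
  · refine Or.inr ⟨?_, ?_, (PM.neg_left hw₃).symm.trans ?_⟩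
    · convert hs.symm using 1; module
    · convert hw₂.symm using 1; module
    · left; module

namespace QCompat

variable {G : Graph} {m : ℕ} {label : G.E → (Fin m → ℤ)} {lam : G.V → (Fin m → ℤ)}
  {qpair : G.E → G.E} {v : G.V} {s s' : List (G.E × (Fin m → ℤ))} {ℓ : Fin m → ℤ}

theorem mono (h : QCompat G label lam qpair v s' ℓ) (hs : s ⊆ s') :
    QCompat G label lam qpair v s ℓ :=
  let ⟨L, hL, hmem⟩ := h
  ⟨L, hL, fun p hp => hmem p (hs hp)⟩

theorem pm_label (h : QCompat G label lam qpair v s ℓ) {e : G.E} {x : Fin m → ℤ}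
    (hmem : (e, x) ∈ s) (he : G.src e = v) : PM x (label e) := by
  obtain ⟨L, ⟨-, hL⟩, hs⟩ := h
  simpa only [hs _ hmem] using (hL e he).1

end QCompat

namespace QuatStructure

variable {G : Graph} {m : ℕ} {A : Axial G m} (Q : QuatStructure G A)

theorem qpair_eq_of_forall_src_eq {e f : G.E}
    (hedges : ∀ h, G.src h = G.src e → h = e ∨ h = f) : Q.qpair e = f :=
  (hedges _ (Q.qpair_src e)).resolve_left (Q.qpair_ne e)

theorem qcompat_of_forall_src_eq {e : G.E} {x y : Fin m → ℤ}
    (hedges : ∀ h, G.src h = G.src e → h = e ∨ h = Q.qpair e) (hx : PM x (A.label e))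
    (hy : PM y (A.label (Q.qpair e))) (hl : PM (x + y) (Q.lam (G.src e))) :
    QCompat G A.label Q.lam Q.qpair (G.src e) [(e, x), (Q.qpair e, y)] (x + y) := by
  classical
  have hne : Q.qpair e ≠ e := Q.qpair_ne e
  refine ⟨fun h => if h = e then x else y, ⟨hl, fun h hh => ?_⟩, ?_⟩
  · rcases hedges h hh with rfl | rfl
    · simp [hne, hx]
    · simp [hne, hy, Q.qpair_invol, add_comm]
  · simp [hne]

/-- Since `∇_e e = ē` and `∇_e` preserves quaternionic pairs, condition (2) along `e` carries
the partner of `e` to the partner of `ē`. -/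
theorem exists_transport_qpair {e : G.E} {x y : Fin m → ℤ}
    (hxy : QCompat G A.label Q.lam Q.qpair (G.src e) [(e, x), (Q.qpair e, y)] (x + y)) :
    ∃ c : ℤ, PM (y + c • x) (A.label (Q.qpair (G.bar e))) ∧
      PM (y + c • x - x) (Q.lam (G.tgt e)) := by
  obtain ⟨C, hC, hCq, hcond⟩ := Q.cond₂
  have hmap : C.map e (Q.qpair e) = Q.qpair (G.bar e) := by rw [hCq e e rfl, C.map_self]
  obtain ⟨lw, -, -, htransport⟩ := hcond e x (x + y) (hxy.mono (by simp))
  obtain ⟨y₀, y₁, hy₀, hy₁, c, hc⟩ := hC e (Q.qpair e) (Q.qpair_src e)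
  have hy : PM y (A.label (Q.qpair e)) := hxy.pm_label (by simp) (Q.qpair_src e)
  obtain ⟨c', hz⟩ := (hy₀.trans hy.symm).exists_pm_add_smul hc
  have hzlabel := hz.trans hy₁
  obtain ⟨L, ⟨hlw, hL⟩, hmem⟩ := htransport (Q.qpair e) (Q.qpair_src e) y hxy _ hzlabel ⟨c', rfl⟩
  have hx : PM x (A.label e) := hxy.pm_label (by simp) rfl
  obtain ⟨d, hd⟩ := hx.symm.exists_smul_eq c'
  have hbar : L (G.bar e) = -x := hmem (G.bar e, -x) (by simp)
  have hpartner : L (C.map e (Q.qpair e)) = y + c' • A.label e := hmem (_, _) (by simp)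
  have hsum := (hL (G.bar e) rfl).2
  rw [← hmap, hbar, hpartner] at hsum
  refine ⟨d, ?_, ?_⟩
  · rw [← hd, ← hmap]
    exact hzlabel
  · rwa [← hd, show y + c' • A.label e - x = lw by rw [← hsum]; abel]

end QuatStructure

theorem Graph.src_ne_tgt (G : Graph) (e : G.E) : G.src e ≠ G.tgt e :=
  (G.no_loop e).symm

theorem Graph.edges_of_triangle {G : Graph} {p₁ p₂ p₃ : G.V} {e₁₂ e₁₃ e₂₃ : G.E}
    (hs₁ : G.src e₁₂ = p₁) (ht₁ : G.tgt e₁₂ = p₂)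
    (hs₂ : G.src e₁₃ = p₁) (ht₂ : G.tgt e₁₃ = p₃)
    (hs₃ : G.src e₂₃ = p₂) (ht₃ : G.tgt e₂₃ = p₃)
    (hE : ∀ h : G.E, h = e₁₂ ∨ h = e₁₃ ∨ h = e₂₃ ∨
        h = G.bar e₁₂ ∨ h = G.bar e₁₃ ∨ h = G.bar e₂₃) :
    (∀ h, G.src h = p₁ → h = e₁₂ ∨ h = e₁₃) ∧
    (∀ h, G.src h = p₂ → h = G.bar e₁₂ ∨ h = e₂₃) ∧
    (∀ h, G.src h = p₃ → h = G.bar e₁₃ ∨ h = G.bar e₂₃) := by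
  have h₁₂ : p₁ ≠ p₂ := hs₁ ▸ ht₁ ▸ G.src_ne_tgt e₁₂
  have h₁₃ : p₁ ≠ p₃ := hs₂ ▸ ht₂ ▸ G.src_ne_tgt e₁₃
  have h₂₃ : p₂ ≠ p₃ := hs₃ ▸ ht₃ ▸ G.src_ne_tgt e₂₃
  simp only [Graph.tgt] at ht₁ ht₂ ht₃
  refine ⟨fun h hh => ?_, fun h hh => ?_, fun h hh => ?_⟩ <;>
    rcases hE h with rfl | rfl | rfl | rfl | rfl | rfl <;> simp_all [eq_comm]

theorem triangle_classification_general (G : Graph) {m : ℕ} (A : Axial G m)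
    (Q : QuatStructure G A)
    (p₁ p₂ p₃ : G.V)
    (e₁₂ e₁₃ e₂₃ : G.E)
    (hs₁ : G.src e₁₂ = p₁) (ht₁ : G.tgt e₁₂ = p₂)
    (hs₂ : G.src e₁₃ = p₁) (ht₂ : G.tgt e₁₃ = p₃)
    (hs₃ : G.src e₂₃ = p₂) (ht₃ : G.tgt e₂₃ = p₃)
    (hE : ∀ h : G.E, h = e₁₂ ∨ h = e₁₃ ∨ h = e₂₃ ∨
        h = G.bar e₁₂ ∨ h = G.bar e₁₃ ∨ h = G.bar e₂₃)
    (a b : Fin m → ℤ)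
    (ha : PM a (A.label e₁₂)) (hb : PM b (A.label e₁₃)) (hl : PM (a + b) (Q.lam p₁)) :
    ((PM (A.label e₂₃) (a + b) ∧ PM (Q.lam p₂) b ∧ PM (Q.lam p₃) a) ∨
     (PM (A.label e₂₃) (b - a) ∧ PM (Q.lam p₂) (b - (2 : ℤ) • a) ∧
        PM (Q.lam p₃) ((2 : ℤ) • b - a))) ∧
    ¬ ((PM (A.label e₂₃) (a + b) ∧ PM (Q.lam p₂) b ∧ PM (Q.lam p₃) a) ∧
       (PM (A.label e₂₃) (b - a) ∧ PM (Q.lam p₂) (b - (2 : ℤ) • a) ∧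
        PM (Q.lam p₃) ((2 : ℤ) • b - a))) := by
  obtain ⟨at₁, at₂, at₃⟩ := G.edges_of_triangle hs₁ ht₁ hs₂ ht₂ hs₃ ht₃ hE
  subst hs₁ ht₁ ht₂
  have hq₁ : Q.qpair e₁₂ = e₁₃ := Q.qpair_eq_of_forall_src_eq at₁
  have hq₂ : Q.qpair (G.bar e₁₂) = e₂₃ := Q.qpair_eq_of_forall_src_eq at₂
  have hq₃ : Q.qpair (G.bar e₁₃) = G.bar e₂₃ := Q.qpair_eq_of_forall_src_eq at₃
  have hq₁' : Q.qpair e₁₃ = e₁₂ := hq₁ ▸ Q.qpair_invol e₁₂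
  have hpair₁₂ := Q.qcompat_of_forall_src_eq (hq₁ ▸ at₁) ha (hq₁ ▸ hb) hl
  have hpair₁₃ := Q.qcompat_of_forall_src_eq (e := e₁₃)
    (fun h hh => hq₁' ▸ (at₁ h (hs₂ ▸ hh)).symm) hb (hq₁' ▸ ha) (hs₂ ▸ add_comm a b ▸ hl)
  obtain ⟨s, hs, hw₂⟩ := Q.exists_transport_qpair hpair₁₂
  obtain ⟨t, ht, hw₃⟩ := Q.exists_transport_qpair hpair₁₃
  rw [hq₂] at hs
  rw [hq₃] at ht
  have hab := linearIndependent_of_pm (linearIndependent_int_of_ratQ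
    (A.indep₂ e₁₂ e₁₃ hs₂ (hq₁ ▸ (Q.qpair_ne e₁₂).symm))) ha hb
  exact triangle_cases_of_lifts hab hs hw₂ (ht.trans (A.label_bar e₂₃)) hw₃

/-- On a triangle with a quaternionic structure, with quaternionically compatible lifts
`a, b` at the vertex `p₁`, exactly one of the two cases "noncomplex" or "complex"
occurs, with the stated labels and quaternionic weights. -/
theorem triangle_classification (G : Graph) {m : ℕ} (A : Axial G m)
    (Q : QuatStructure G A)
    (p₁ p₂ p₃ : G.V) (h₁₂ : p₁ ≠ p₂) (h₁₃ : p₁ ≠ p₃) (h₂₃ : p₂ ≠ p₃)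
    (e₁₂ e₁₃ e₂₃ : G.E)
    (hs₁ : G.src e₁₂ = p₁) (ht₁ : G.tgt e₁₂ = p₂)
    (hs₂ : G.src e₁₃ = p₁) (ht₂ : G.tgt e₁₃ = p₃)
    (hs₃ : G.src e₂₃ = p₂) (ht₃ : G.tgt e₂₃ = p₃)
    (hV : ∀ u : G.V, u = p₁ ∨ u = p₂ ∨ u = p₃)
    (hE : ∀ h : G.E, h = e₁₂ ∨ h = e₁₃ ∨ h = e₂₃ ∨
        h = G.bar e₁₂ ∨ h = G.bar e₁₃ ∨ h = G.bar e₂₃)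
    (a b : Fin m → ℤ)
    (ha : PM a (A.label e₁₂)) (hb : PM b (A.label e₁₃)) (hl : PM (a + b) (Q.lam p₁)) :
    ((PM (A.label e₂₃) (a + b) ∧ PM (Q.lam p₂) b ∧ PM (Q.lam p₃) a) ∨
     (PM (A.label e₂₃) (b - a) ∧ PM (Q.lam p₂) (b - (2 : ℤ) • a) ∧
        PM (Q.lam p₃) ((2 : ℤ) • b - a))) ∧
    ¬ ((PM (A.label e₂₃) (a + b) ∧ PM (Q.lam p₂) b ∧ PM (Q.lam p₃) a) ∧
       (PM (A.label e₂₃) (b - a) ∧ PM (Q.lam p₂) (b - (2 : ℤ) • a) ∧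
        PM (Q.lam p₃) ((2 : ℤ) • b - a))) :=
  triangle_classification_general G A Q p₁ p₂ p₃ e₁₂ e₁₃ e₂₃ hs₁ ht₁ hs₂ ht₂ hs₃ ht₃ hE a b ha hb hl

end GKMQ
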